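/- arXiv:1912.03534 — 5 statements merged into one kernel-verified Lean document; each statement's English description precedes it below -/
import Mathlib

section
/- If χ is a smooth compactly supported function on ℝ^N with χ(0) = 0, then for every positive integer l there is a constant C_l such that for all λ > 0 and all η ∈ ℝ^N, the quantity |∫_{|η−ξ|<λ} χ̂(ξ) dξ − (2π)^{N/2} χ(0) · 𝟙_{|η|<λ}| (which equals |(2π)^N ê_λ(η)| where e_λ(x) = e(x,λ)χ(x)) is bounded by C_l (1 + ||η| − λ|)^{−l}. -/
set_option maxHeartbeats 1000000

open MeasureTheory Real Complex Metric FourierTransform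

noncomputable def mySchwartz {E F : Type*} [NormedAddCommGroup E] [NormedSpace ℝ E]
    [NormedAddCommGroup F] [NormedSpace ℝ F] (f : E → F) (hf : ContDiff ℝ (⊤ : ℕ∞) f)
    (h : HasCompactSupport f) : SchwartzMap E F where
  toFun := f
  smooth' := hf.of_le (by simp)
  decay' := by
    intro k n
    have h1 : HasCompactSupport (fun x : E => ‖x‖ ^ k • iteratedFDeriv ℝ n f x) := by
      apply HasCompactSupport.mono (h.iteratedFDeriv (𝕜 := ℝ) n)
      intro x hx
      simp only [Function.mem_support] at hx ⊢
      exact fun h0 => hx (by rw [h0, smul_zero])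
    have h2 : Continuous fun x : E => ‖x‖ ^ k • iteratedFDeriv ℝ n f x := by
      exact (continuous_norm.pow k).smul (ContDiff.continuous_iteratedFDeriv (by exact_mod_cast le_top) hf)
    obtain ⟨C, hC⟩ := h2.bounded_above_of_compact_support h1
    refine ⟨C, fun x => ?_⟩
    have h3 := hC x
    calc ‖x‖ ^ k * ‖iteratedFDeriv ℝ n f x‖ = ‖(‖x‖ ^ k) • iteratedFDeriv ℝ n f x‖ := by
          rw [norm_smul (‖x‖ ^ k) (iteratedFDeriv ℝ n f x), Real.norm_eq_abs,
            _root_.abs_of_nonneg (by positivity : (0:ℝ) ≤ ‖x‖ ^ k)]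
      _ ≤ C := h3

open scoped RealInnerProductSpace

/-- If `χ` is a smooth compactly supported function on `ℝ^N` with `χ 0 = 0`, then for every
positive integer `l` there is `C_l` such that for all `λ > 0` and `η`,
`|∫_{|η-ξ|<λ} χ̂(ξ) dξ - (2π)^{N/2} χ(0) 𝟙_{|η|<λ}| ≤ C_l (1+||η|-λ|)^{-l}`,
where `χ̂(ξ) = (2π)^{-N/2} ∫ χ(x) e^{-i x·ξ} dx`. -/
theorem stmt0 (N : ℕ) (hN : 1 ≤ N) (χ : EuclideanSpace ℝ (Fin N) → ℂ)
    (hχ : ContDiff ℝ (⊤ : ℕ∞) χ) (hsupp : HasCompactSupport χ) (h0 : χ 0 = 0)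
    (χhat : EuclideanSpace ℝ (Fin N) → ℂ)
    (hχhat : ∀ ξ, χhat ξ =
      ((2 * π : ℝ) ^ (-(N : ℝ) / 2) : ℝ) *
        ∫ x, χ x * Complex.exp (-Complex.I * ((inner ℝ x ξ : ℝ) : ℂ))) :
    ∀ l : ℕ, 0 < l → ∃ C : ℝ, ∀ lam : ℝ, 0 < lam → ∀ η : EuclideanSpace ℝ (Fin N),
      ‖(∫ ξ in ball η lam, χhat ξ) -
          ((2 * π : ℝ) ^ ((N : ℝ) / 2) : ℝ) * χ 0 * (if ‖η‖ < lam then 1 else 0)‖ ≤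
        C * (1 + |‖η‖ - lam|) ^ (-(l : ℝ)) := by
  intro l hl
  have h2pi : (1:ℝ) ≤ 2 * π := by nlinarith [Real.pi_gt_three]
  have h2pi0 : (0:ℝ) < 2 * π := by linarith
  set S : SchwartzMap (EuclideanSpace ℝ (Fin N)) ℂ := mySchwartz χ hχ hsupp with hS
  set T : SchwartzMap (EuclideanSpace ℝ (Fin N)) ℂ := SchwartzMap.fourierTransformCLM ℝ S with hT
  have hTapp : ∀ w : EuclideanSpace ℝ (Fin N), T w = 𝓕 χ w := by
    intro w
    rw [hT, SchwartzMap.fourierTransformCLM_apply]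
    rfl
  -- χhat in terms of 𝓕 χ
  have key : ∀ ξ : EuclideanSpace ℝ (Fin N), χhat ξ = ((2 * π : ℝ) ^ (-(N : ℝ) / 2) : ℝ) * T ((2 * π)⁻¹ • ξ) := by
    intro ξ
    rw [hχhat ξ, hTapp, Real.fourier_eq']
    congr 1
    apply integral_congr_ae; filter_upwards with x
    rw [smul_eq_mul, mul_comm ((Complex.exp _)) _]
    congr 1
    have hinner : ⟪x, (2 * π)⁻¹ • ξ⟫ = (2 * π)⁻¹ * ⟪x, ξ⟫ := real_inner_smul_right x ξ _
    rw [hinner]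
    have hr : -2 * π * ((2 * π)⁻¹ * ⟪x, ξ⟫) = -⟪x, ξ⟫ := by field_simp
    rw [hr]
    push_cast
    ring
  -- decay of T
  set k : ℕ := l + (N + 1) with hk
  obtain ⟨c, hc0, hTdecay⟩ : ∃ c : ℝ, 0 ≤ c ∧ ∀ w : EuclideanSpace ℝ (Fin N),
      ‖T w‖ ≤ c * ((1 + ‖w‖) ^ k)⁻¹ := by
    refine ⟨2 ^ k * (Finset.Iic (k, 0)).sup (fun m => SchwartzMap.seminorm ℝ m.1 m.2) T,
      by positivity, fun w => ?_⟩
    have h := SchwartzMap.one_add_le_sup_seminorm_apply (𝕜 := ℝ) (m := (k, 0))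
      le_rfl le_rfl T w
    rw [norm_iteratedFDeriv_zero] at h
    rw [← div_eq_mul_inv, le_div_iff₀ (by positivity)]
    linarith [h]
  -- pointwise bound for χhat
  set C₀ : ℝ := (2 * π) ^ (-(N : ℝ) / 2) * ((2 * π) ^ k * c) with hC₀
  have hC₀0 : 0 ≤ C₀ := by positivity
  have hbound : ∀ ξ : EuclideanSpace ℝ (Fin N),
      ‖χhat ξ‖ ≤ C₀ * (1 + ‖ξ‖) ^ (-(k : ℝ)) := by
    intro ξ
    rw [key ξ]
    have hw : ‖(2 * π)⁻¹ • ξ‖ = (2 * π)⁻¹ * ‖ξ‖ := by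
      rw [norm_smul, Real.norm_eq_abs, abs_of_pos (by positivity)]
    have h1 : (1 + ‖ξ‖) ≤ (2 * π) * (1 + ‖(2 * π)⁻¹ • ξ‖) := by
      rw [hw]; rw [mul_add]
      have : 2 * π * ((2 * π)⁻¹ * ‖ξ‖) = ‖ξ‖ := by field_simp
      rw [this, mul_one]
      linarith
    have hpos1 : (0:ℝ) < 1 + ‖(2 * π)⁻¹ • ξ‖ := by positivity
    have hpos2 : (0:ℝ) < 1 + ‖ξ‖ := by positivity
    have h2 : ((1 + ‖(2 * π)⁻¹ • ξ‖) ^ k)⁻¹ ≤ (2 * π) ^ k * ((1 + ‖ξ‖) ^ k)⁻¹ := by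
      rw [← div_eq_mul_inv, le_div_iff₀ (by positivity), inv_mul_eq_div,
        div_le_iff₀ (by positivity), ← mul_pow]
      exact pow_le_pow_left₀ (le_of_lt hpos2) h1 k
    have h3 : ‖T ((2 * π)⁻¹ • ξ)‖ ≤ (2 * π) ^ k * c * ((1 + ‖ξ‖) ^ k)⁻¹ := by
      calc ‖T ((2 * π)⁻¹ • ξ)‖ ≤ c * ((1 + ‖(2 * π)⁻¹ • ξ‖) ^ k)⁻¹ := hTdecay _
        _ ≤ c * ((2 * π) ^ k * ((1 + ‖ξ‖) ^ k)⁻¹) := by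
            exact mul_le_mul_of_nonneg_left h2 hc0
        _ = (2 * π) ^ k * c * ((1 + ‖ξ‖) ^ k)⁻¹ := by ring
    have hrpow : (1 + ‖ξ‖) ^ (-(k : ℝ)) = ((1 + ‖ξ‖) ^ k)⁻¹ := by
      rw [Real.rpow_neg (le_of_lt hpos2), Real.rpow_natCast]
    rw [norm_mul, hrpow, hC₀]
    have : ‖((((2 * π) ^ (-(N : ℝ) / 2) : ℝ)) : ℂ)‖ = (2 * π) ^ (-(N : ℝ) / 2) := by
      rw [Complex.norm_real, Real.norm_eq_abs, abs_of_pos (Real.rpow_pos_of_pos h2pi0 _)]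
    rw [this, mul_assoc]
    exact mul_le_mul_of_nonneg_left h3 (le_of_lt (Real.rpow_pos_of_pos h2pi0 _))
  -- continuity and integrability of χhat
  have hcont : Continuous χhat := by
    have : χhat = fun ξ => ((((2 * π : ℝ) ^ (-(N : ℝ) / 2) : ℝ)) : ℂ) * T ((2 * π)⁻¹ • ξ) :=
      funext key
    rw [this]
    exact continuous_const.mul (T.continuous.comp (continuous_const_smul _))
  have hkN : (Module.finrank ℝ (EuclideanSpace ℝ (Fin N)) : ℝ) < (k : ℝ) := by
    rw [finrank_euclideanSpace_fin]
    push_cast [hk]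
    have : (0:ℝ) < l := by exact_mod_cast hl
    linarith
  have hint : Integrable χhat := by
    refine ((integrable_one_add_norm hkN).const_mul C₀).mono'
      hcont.aestronglyMeasurable ?_
    filter_upwards with ξ
    exact hbound ξ
  -- integral of χhat is zero
  have hintχ : Integrable χ := hχ.continuous.integrable_of_hasCompactSupport hsupp
  have hintF : Integrable (𝓕 χ) := by
    refine T.integrable.congr (Filter.Eventually.of_forall hTapp)
  have hFzero : (∫ w, 𝓕 χ w) = 0 := by
    have hinv := hχ.continuous.fourierInv_fourier_eq hintχ hintF
    have h00 : (∫ v, 𝐞 (⟪v, (0 : EuclideanSpace ℝ (Fin N))⟫) • 𝓕 χ v) = χ 0 := by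
      rw [← Real.fourierInv_eq, hinv]
    rw [h0] at h00
    rw [← h00]
    apply integral_congr_ae
    filter_upwards with v
    simp [Circle.smul_def, Real.fourierChar_apply, inner_zero_right]
  have hzero : (∫ ξ, χhat ξ) = 0 := by
    have e1 : (∫ ξ, χhat ξ) =
        ((((2 * π : ℝ) ^ (-(N : ℝ) / 2) : ℝ)) : ℂ) * ∫ ξ, 𝓕 χ ((2 * π)⁻¹ • ξ) := by
      rw [← integral_const_mul]
      apply integral_congr_ae
      filter_upwards with ξ
      rw [key ξ, hTapp]
    rw [e1, Measure.integral_comp_smul volume (𝓕 χ) ((2 * π)⁻¹), hFzero, smul_zero, mul_zero]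
  -- tail integral
  set I : ℝ := ∫ ξ : EuclideanSpace ℝ (Fin N), (1 + ‖ξ‖) ^ (-((N : ℝ) + 1)) with hI
  have hNN1 : (Module.finrank ℝ (EuclideanSpace ℝ (Fin N)) : ℝ) < (N : ℝ) + 1 := by
    rw [finrank_euclideanSpace_fin]; linarith
  have hIint : Integrable (fun ξ : EuclideanSpace ℝ (Fin N) => (1 + ‖ξ‖) ^ (-((N : ℝ) + 1))) :=
    integrable_one_add_norm hNN1
  have hI0 : 0 ≤ I := integral_nonneg fun ξ => Real.rpow_nonneg (by positivity) _
  -- key tail estimate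
  have helper : ∀ d : ℝ, 0 ≤ d → ∀ s : Set (EuclideanSpace ℝ (Fin N)), MeasurableSet s →
      (∀ ξ ∈ s, d ≤ ‖ξ‖) → ‖∫ ξ in s, χhat ξ‖ ≤ C₀ * I * (1 + d) ^ (-(l : ℝ)) := by
    intro d hd s hs hsub
    have hld : (0:ℝ) < 1 + d := by linarith
    have step1 : ‖∫ ξ in s, χhat ξ‖ ≤
        ∫ ξ in s, C₀ * (1 + d) ^ (-(l : ℝ)) * (1 + ‖ξ‖) ^ (-((N : ℝ) + 1)) := by
      apply norm_integral_le_of_norm_le ((hIint.const_mul _).restrict)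
      rw [ae_restrict_iff' hs]
      filter_upwards with ξ hξ
      have hpos : (0:ℝ) < 1 + ‖ξ‖ := by positivity
      calc ‖χhat ξ‖ ≤ C₀ * (1 + ‖ξ‖) ^ (-(k : ℝ)) := hbound ξ
        _ = C₀ * ((1 + ‖ξ‖) ^ (-(l : ℝ)) * (1 + ‖ξ‖) ^ (-((N : ℝ) + 1))) := by
            rw [← Real.rpow_add hpos]
            congr 1
            rw [hk]; push_cast; ring
        _ ≤ C₀ * ((1 + d) ^ (-(l : ℝ)) * (1 + ‖ξ‖) ^ (-((N : ℝ) + 1))) := by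
            apply mul_le_mul_of_nonneg_left _ hC₀0
            apply mul_le_mul_of_nonneg_right _ (Real.rpow_nonneg (le_of_lt hpos) _)
            exact Real.rpow_le_rpow_of_nonpos hld (by linarith [hsub ξ hξ])
              (by simp)
        _ = C₀ * (1 + d) ^ (-(l : ℝ)) * (1 + ‖ξ‖) ^ (-((N : ℝ) + 1)) := by ring
    have step2 : (∫ ξ in s, C₀ * (1 + d) ^ (-(l : ℝ)) * (1 + ‖ξ‖) ^ (-((N : ℝ) + 1)))
        ≤ C₀ * (1 + d) ^ (-(l : ℝ)) * I := by
      rw [MeasureTheory.integral_const_mul]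
      apply mul_le_mul_of_nonneg_left _ (by positivity)
      apply setIntegral_le_integral hIint
      filter_upwards with ξ using Real.rpow_nonneg (by positivity) _
    calc ‖∫ ξ in s, χhat ξ‖ ≤ _ := step1
      _ ≤ C₀ * (1 + d) ^ (-(l : ℝ)) * I := step2
      _ = C₀ * I * (1 + d) ^ (-(l : ℝ)) := by ring
  -- conclusion
  refine ⟨C₀ * I, fun lam hlam η => ?_⟩
  rw [h0, mul_zero, zero_mul, sub_zero]
  have habs : 0 ≤ |‖η‖ - lam| := abs_nonneg _
  by_cases hcase : ‖η‖ < lam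
  · -- use the complement
    have hsplit := integral_add_compl (measurableSet_ball (x := η) (ε := lam)) hint
    rw [hzero] at hsplit
    have hneg : (∫ ξ in ball η lam, χhat ξ) = -∫ ξ in (ball η lam)ᶜ, χhat ξ := by
      linear_combination hsplit
    rw [hneg, norm_neg]
    apply helper _ habs _ (measurableSet_ball.compl)
    intro ξ hξ
    rw [Set.mem_compl_iff, mem_ball, not_lt] at hξ
    have h1 : dist ξ η ≤ ‖ξ‖ + ‖η‖ := by
      rw [dist_eq_norm]; exact norm_sub_le _ _
    have h2 : |‖η‖ - lam| = lam - ‖η‖ := by rw [abs_of_neg (by linarith)]; ring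
    rw [h2]; linarith
  · -- use the ball itself
    apply helper _ habs _ measurableSet_ball
    intro ξ hξ
    rw [mem_ball] at hξ
    have h1 : ‖η‖ ≤ dist ξ η + ‖ξ‖ := by
      rw [dist_eq_norm]
      calc ‖η‖ = ‖ξ - (ξ - η)‖ := by congr 1; abel
        _ ≤ ‖ξ - η‖ + ‖ξ‖ := by
            calc ‖ξ - (ξ - η)‖ ≤ ‖ξ‖ + ‖ξ - η‖ := norm_sub_le _ _
              _ = ‖ξ - η‖ + ‖ξ‖ := by ring
    have h2 : |‖η‖ - lam| = ‖η‖ - lam := abs_of_nonneg (by push_neg at hcase; linarith)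
    rw [h2]; linarith
end

section
/- Let χ̂: ℝ^N → ℂ satisfy |χ̂(ξ)| ≤ C_j (1+|ξ|)^{−j} for every positive integer j (with constants C_j), and assume ∫_{ℝ^N} χ̂ = 0. Then for every l ∈ ℕ there is a constant C_l' such that for all λ > 0 and η ∈ ℝ^N: |∫_{|η−ξ|<λ} χ̂(ξ) dξ| ≤ C_l' (1 + ||η| − λ|)^{−l}. -/
open MeasureTheory Real Metric

/-!
Split off the weight `(1 + ‖ξ‖)^l`: since `χ̂` decays faster than `(1 + ‖ξ‖)^(-(l + N + 1))`,
the function `‖χ̂ ξ‖ (1 + ‖ξ‖)^l` is integrable, so the integral of `‖χ̂‖` over any region where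
`‖ξ‖ ≥ r` is `O((1 + r)^(-l))`. If `‖η‖ ≥ λ`, the ball `B(η, λ)` lies in `‖ξ‖ ≥ ‖η‖ - λ`.
If `‖η‖ < λ`, the vanishing of `∫ χ̂` trades the ball for its complement, which lies in
`‖ξ‖ ≥ λ - ‖η‖`.
-/

section Geometry

variable {E : Type*} [SeminormedAddCommGroup E]

lemma norm_sub_le_norm_of_mem_ball {η ξ : E} {r : ℝ} (hξ : ξ ∈ ball η r) : ‖η‖ - r ≤ ‖ξ‖ := by
  have := norm_sub_norm_le η ξ
  rw [mem_ball, dist_eq_norm, norm_sub_rev] at hξ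
  linarith

lemma sub_norm_le_norm_of_notMem_ball {η ξ : E} {r : ℝ} (hξ : ξ ∉ ball η r) : r - ‖η‖ ≤ ‖ξ‖ := by
  have := norm_sub_le ξ η
  rw [mem_ball, not_lt, dist_eq_norm] at hξ
  linarith

end Geometry

section Integrals

variable {α E G : Type*} [MeasurableSpace α] [NormedAddCommGroup E] [MeasurableSpace E]
  [NormedAddCommGroup G]

lemma integrable_norm_mul_one_add_norm_rpow [NormedSpace ℝ E] [FiniteDimensional ℝ E]
    [BorelSpace E] {μ : Measure E} [μ.IsAddHaarMeasure] {f : E → G}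
    (hf : AEStronglyMeasurable f μ) {l k C : ℝ} (hk : (Module.finrank ℝ E : ℝ) < k)
    (hdecay : ∀ ξ, ‖f ξ‖ ≤ C * (1 + ‖ξ‖) ^ (-(l + k))) :
    Integrable (fun ξ ↦ ‖f ξ‖ * (1 + ‖ξ‖) ^ l) μ := by
  refine ((integrable_one_add_norm hk).const_mul C).mono'
    (hf.norm.mul (Measurable.aestronglyMeasurable (by fun_prop))) (.of_forall fun ξ ↦ ?_)
  have h1 : 0 < 1 + ‖ξ‖ := by positivity
  rw [norm_of_nonneg (by positivity)]
  calc ‖f ξ‖ * (1 + ‖ξ‖) ^ l ≤ C * (1 + ‖ξ‖) ^ (-(l + k)) * (1 + ‖ξ‖) ^ l := by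
        gcongr
        exact hdecay ξ
    _ = C * (1 + ‖ξ‖) ^ (-k) := by rw [mul_assoc, ← rpow_add h1]; ring_nf

variable [NormedSpace ℝ G]

lemma norm_setIntegral_compl_of_integral_eq_zero {μ : Measure α} {f : α → G} {s : Set α}
    (hs : MeasurableSet s) (hf : Integrable f μ) (h0 : ∫ x, f x ∂μ = 0) :
    ‖∫ x in sᶜ, f x ∂μ‖ = ‖∫ x in s, f x ∂μ‖ := by
  rw [setIntegral_compl hs hf, h0, zero_sub, norm_neg]

lemma norm_setIntegral_le_of_le_norm {μ : Measure E} {f : E → G} {l r : ℝ} (hl : 0 ≤ l)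
    (hr : 0 ≤ r) (hw : Integrable (fun ξ ↦ ‖f ξ‖ * (1 + ‖ξ‖) ^ l) μ) {s : Set E}
    (hs : MeasurableSet s) (hrs : ∀ ξ ∈ s, r ≤ ‖ξ‖) :
    ‖∫ ξ in s, f ξ ∂μ‖ ≤ (∫ ξ, ‖f ξ‖ * (1 + ‖ξ‖) ^ l ∂μ) * (1 + r) ^ (-l) := by
  have hr1 : 0 < 1 + r := by linarith
  have hpointwise : ∀ ξ ∈ s, ‖f ξ‖ ≤ (1 + r) ^ (-l) * (‖f ξ‖ * (1 + ‖ξ‖) ^ l) := by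
    intro ξ hξ
    have hweight : (1 + r) ^ l ≤ (1 + ‖ξ‖) ^ l := by
      gcongr
      exact hrs ξ hξ
    calc ‖f ξ‖ = (1 + r) ^ (-l) * (‖f ξ‖ * (1 + r) ^ l) := by
          rw [rpow_neg hr1.le]
          field_simp
      _ ≤ (1 + r) ^ (-l) * (‖f ξ‖ * (1 + ‖ξ‖) ^ l) := by gcongr
  calc ‖∫ ξ in s, f ξ ∂μ‖
      ≤ ∫ ξ in s, (1 + r) ^ (-l) * (‖f ξ‖ * (1 + ‖ξ‖) ^ l) ∂μ :=
        norm_integral_le_of_norm_le (hw.const_mul _).restrict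
          ((ae_restrict_iff' hs).2 (.of_forall hpointwise))
    _ = (1 + r) ^ (-l) * ∫ ξ in s, ‖f ξ‖ * (1 + ‖ξ‖) ^ l ∂μ := integral_const_mul _ _
    _ ≤ (1 + r) ^ (-l) * ∫ ξ, ‖f ξ‖ * (1 + ‖ξ‖) ^ l ∂μ := by
        gcongr
        · exact .of_forall fun ξ ↦ by positivity
        · exact Measure.restrict_le_self
    _ = _ := mul_comm _ _

end Integrals

theorem stmt1_general (N : ℕ) (χhat : EuclideanSpace ℝ (Fin N) → ℂ)
    (hdecay : ∀ j : ℕ, 0 < j → ∃ Cj : ℝ, ∀ ξ, ‖χhat ξ‖ ≤ Cj * (1 + ‖ξ‖) ^ (-(j : ℝ)))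
    (hint : Integrable χhat)
    (hvanish : (∫ ξ, χhat ξ) = 0) :
    ∀ l : ℕ, ∃ C : ℝ, ∀ lam : ℝ, 0 < lam → ∀ η : EuclideanSpace ℝ (Fin N),
      ‖∫ ξ in ball η lam, χhat ξ‖ ≤ C * (1 + |‖η‖ - lam|) ^ (-(l : ℝ)) := by
  intro l
  obtain ⟨C, hC⟩ := hdecay (l + (N + 1)) (by positivity)
  have hw := integrable_norm_mul_one_add_norm_rpow (l := l) (k := N + 1) hint.aestronglyMeasurable
    (by simp) (by simpa using hC)
  refine ⟨∫ ξ, ‖χhat ξ‖ * (1 + ‖ξ‖) ^ (l : ℝ), fun lam _ η ↦ ?_⟩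
  rcases le_or_gt lam ‖η‖ with h | h
  · refine norm_setIntegral_le_of_le_norm l.cast_nonneg (abs_nonneg _) hw measurableSet_ball
      fun ξ hξ ↦ ?_
    rw [abs_of_nonneg (by linarith)]
    exact norm_sub_le_norm_of_mem_ball hξ
  · rw [← norm_setIntegral_compl_of_integral_eq_zero measurableSet_ball hint hvanish]
    refine norm_setIntegral_le_of_le_norm l.cast_nonneg (abs_nonneg _) hw
      measurableSet_ball.compl fun ξ hξ ↦ ?_
    rw [abs_of_neg (by linarith), neg_sub]
    exact sub_norm_le_norm_of_notMem_ball hξ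

/-- If `χ̂ : ℝ^N → ℂ` satisfies `|χ̂(ξ)| ≤ C_j (1+|ξ|)^{-j}` for every positive integer `j`
and `∫ χ̂ = 0`, then for every `l` there is `C_l'` with
`|∫_{|η-ξ|<λ} χ̂(ξ) dξ| ≤ C_l' (1+||η|-λ|)^{-l}` for all `λ > 0`, `η`. -/
theorem stmt1 (N : ℕ) (hN : 1 ≤ N) (χhat : EuclideanSpace ℝ (Fin N) → ℂ)
    (hdecay : ∀ j : ℕ, 0 < j → ∃ Cj : ℝ, ∀ ξ, ‖χhat ξ‖ ≤ Cj * (1 + ‖ξ‖) ^ (-(j : ℝ)))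
    (hint : Integrable χhat)
    (hvanish : (∫ ξ, χhat ξ) = 0) :
    ∀ l : ℕ, ∃ C : ℝ, ∀ lam : ℝ, 0 < lam → ∀ η : EuclideanSpace ℝ (Fin N),
      ‖∫ ξ in ball η lam, χhat ξ‖ ≤ C * (1 + |‖η‖ - lam|) ^ (-(l : ℝ)) :=
  stmt1_general N χhat hdecay hint hvanish
end

section
/- Let ψ: 𝕋^N → ℂ be a smooth 2π-periodic function with Fourier coefficients ψ_m satisfying |ψ_m| ≤ c_q (1+|m|)^{−q} for every q ∈ ℕ. Define, for j ∈ ℕ and n ∈ ℤ^N, (θ_j)_n = (2π)^{−N} Σ_{|m|² < j} ψ_{m−n}. Then for every l ∈ ℕ there is a constant C_l such that |(θ_j)_n| ≤ C_l (1 + ||n| − √j|)^{−l} for all j ∈ ℕ and n ∈ ℤ^N, provided additionally Σ_{m ∈ ℤ^N} ψ_m = 0 (i.e. ψ vanishes at the origin). -/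
/-!
Let `S = {m : |m|² < j}` and `r = ||n| - √j|`. If `√j ≤ |n|`, every `m ∈ S` has `|m - n| ≥ r` by
the triangle inequality. If `|n| ≤ √j`, the hypothesis `∑ ψ_m = 0` turns the sum over `S` into
minus the sum over its complement, whose points again satisfy `|m - n| ≥ r`. Either way
`|(θ_j)_n|` is at most the tail `∑_{|k| ≥ r} |ψ_k|`, and rapid decay bounds `|ψ_k|` on that tail
by `c (1 + r)^(-l) ∏ᵢ (1 + |kᵢ|)^(-2)`, which is summable over `ℤ^N`.
-/

open Real

/-- Euclidean norm of a lattice point `n ∈ ℤ^N`. -/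
noncomputable def znorm {N : ℕ} (n : Fin N → ℤ) : ℝ :=
  Real.sqrt (∑ i, ((n i : ℝ)) ^ 2)

open Set

section znorm

variable {N : ℕ}

theorem znorm_eq_norm_toLp (n : Fin N → ℤ) :
    znorm n = ‖(WithLp.toLp 2 fun i => (n i : ℝ) : EuclideanSpace ℝ (Fin N))‖ := by
  simp [znorm, EuclideanSpace.norm_eq]

theorem znorm_nonneg (n : Fin N → ℤ) : 0 ≤ znorm n := Real.sqrt_nonneg _

@[simp]
theorem znorm_zero : znorm (0 : Fin N → ℤ) = 0 := by simp [znorm]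

theorem abs_znorm_sub_znorm_le (m n : Fin N → ℤ) : |znorm m - znorm n| ≤ znorm (m - n) := by
  simp only [znorm_eq_norm_toLp, Pi.sub_apply, Int.cast_sub]
  exact abs_norm_sub_norm_le (E := EuclideanSpace ℝ (Fin N)) _ _

theorem abs_apply_le_znorm (k : Fin N → ℤ) (i : Fin N) : |(k i : ℝ)| ≤ znorm k := by
  rw [← Real.sqrt_sq_eq_abs]
  exact Real.sqrt_le_sqrt <|
    Finset.single_le_sum (f := fun i => (k i : ℝ) ^ 2) (fun _ _ => sq_nonneg _) (Finset.mem_univ i)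

theorem znorm_lt_sqrt_iff {m : Fin N → ℤ} {j : ℕ} :
    znorm m < √j ↔ ∑ i, m i ^ 2 < (j : ℤ) := by
  rw [znorm, Real.sqrt_lt_sqrt_iff (by positivity)]
  exact_mod_cast Iff.rfl

theorem one_add_pow_mul_prod_le {k : Fin N → ℤ} {r : ℝ} (hr : 0 ≤ r) (hrk : r ≤ znorm k)
    (l : ℕ) : (1 + r) ^ l * ∏ i, (1 + |(k i : ℝ)|) ^ 2 ≤ (1 + znorm k) ^ (l + 2 * N) := by
  have := znorm_nonneg k
  calc (1 + r) ^ l * ∏ i, (1 + |(k i : ℝ)|) ^ 2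
      ≤ (1 + znorm k) ^ l * ∏ _i : Fin N, (1 + znorm k) ^ 2 := by
        gcongr
        exact abs_apply_le_znorm k _
    _ = (1 + znorm k) ^ (l + 2 * N) := by
        rw [Finset.prod_const, Finset.card_univ, Fintype.card_fin, ← pow_mul, ← pow_add]

end znorm

theorem Summable.prod_apply_pi {α : Type*} {f : α → ℝ} (hf0 : 0 ≤ f) (hf : Summable f) :
    ∀ N : ℕ, Summable fun k : Fin N → α => ∏ i, f (k i)
  | 0 => .of_finite
  | N + 1 => by
    rw [← (Fin.consEquiv fun _ : Fin (N + 1) => α).summable_iff]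
    refine (hf.mul_of_nonneg (hf.prod_apply_pi hf0 N) hf0
      fun k => Finset.prod_nonneg fun i _ => hf0 _).congr fun p => ?_
    simp [Fin.prod_univ_succ]

theorem summable_inv_one_add_abs_sq : Summable fun t : ℤ => ((1 + |(t : ℝ)|) ^ 2)⁻¹ := by
  have hnat : Summable fun n : ℕ => ((1 + (n : ℝ)) ^ 2)⁻¹ := by
    simpa [add_comm] using (summable_nat_add_iff 1).mpr (Real.summable_nat_pow_inv.mpr one_lt_two)
  exact .of_nat_of_neg (by simpa using hnat) (by simpa using hnat)

section decay

variable {N : ℕ} {E : Type*} [NormedAddCommGroup E]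

def RapidlyDecreasing (ψ : (Fin N → ℤ) → E) : Prop :=
  ∀ q : ℕ, ∃ c : ℝ, ∀ m, ‖ψ m‖ ≤ c * (1 + znorm m) ^ (-(q : ℝ))

variable {ψ : (Fin N → ℤ) → E}

theorem RapidlyDecreasing.exists_norm_le_mul_prod (hψ : RapidlyDecreasing ψ) (l : ℕ) :
    ∃ c : ℝ, 0 ≤ c ∧ ∀ r, 0 ≤ r → ∀ k, r ≤ znorm k →
      ‖ψ k‖ ≤ c * (1 + r) ^ (-(l : ℝ)) * ∏ i, ((1 + |(k i : ℝ)|) ^ 2)⁻¹ := by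
  obtain ⟨c, hc⟩ := hψ (l + 2 * N)
  have hc0 : 0 ≤ c := (norm_nonneg _).trans (by simpa using hc 0)
  refine ⟨c, hc0, fun r hr k hrk => (hc k).trans ?_⟩
  simp only [rpow_neg_natCast, zpow_neg, zpow_natCast, mul_assoc]
  rw [Finset.prod_inv_distrib, ← mul_inv]
  gcongr
  exact one_add_pow_mul_prod_le hr hrk l

theorem RapidlyDecreasing.summable_norm (hψ : RapidlyDecreasing ψ) :
    Summable fun k => ‖ψ k‖ := by
  obtain ⟨c, -, hc⟩ := hψ.exists_norm_le_mul_prod 0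
  refine .of_nonneg_of_le (fun _ => norm_nonneg _) (fun k => hc 0 le_rfl k (znorm_nonneg k)) ?_
  simpa using (summable_inv_one_add_abs_sq.prod_apply_pi (fun _ => by positivity) N).mul_left c

theorem RapidlyDecreasing.exists_tsum_indicator_le (hψ : RapidlyDecreasing ψ) (l : ℕ) :
    ∃ C : ℝ, ∀ r, 0 ≤ r →
      ∑' k, {k | r ≤ znorm k}.indicator (fun k => ‖ψ k‖) k ≤ C * (1 + r) ^ (-(l : ℝ)) := by
  obtain ⟨c, hc0, hc⟩ := hψ.exists_norm_le_mul_prod l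
  have hw := summable_inv_one_add_abs_sq.prod_apply_pi (fun _ => by positivity) N
  refine ⟨c * ∑' k : Fin N → ℤ, ∏ i, ((1 + |(k i : ℝ)|) ^ 2)⁻¹, fun r hr => ?_⟩
  calc ∑' k, {k | r ≤ znorm k}.indicator (fun k => ‖ψ k‖) k
      ≤ ∑' k : Fin N → ℤ, c * (1 + r) ^ (-(l : ℝ)) * ∏ i, ((1 + |(k i : ℝ)|) ^ 2)⁻¹ := by
        refine Summable.tsum_le_tsum (fun k => ?_) (hψ.summable_norm.indicator _) (hw.mul_left _)
        by_cases hk : r ≤ znorm k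
        · simpa [hk] using hc r hr k hk
        · simp only [mem_ofPred_eq, hk, not_false_eq_true, indicator_of_notMem]
          positivity
    _ = _ := by rw [tsum_mul_left]; ring

end decay

section indicator

variable {α E : Type*} [NormedAddCommGroup E]

theorem norm_tsum_indicator_comp_sub_le [AddGroup α] {f : α → E}
    (hf : Summable fun a => ‖f a‖) {S T : Set α} {b : α} (hST : ∀ a ∈ S, a - b ∈ T) :
    ‖∑' a, S.indicator (fun a => f (a - b)) a‖ ≤ ∑' a, T.indicator (fun a => ‖f a‖) a := by
  have hshift : Summable fun a => ‖f (a - b)‖ :=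
    (Equiv.subRight b).summable_iff (f := fun a => ‖f a‖) |>.mpr hf
  calc ‖∑' a, S.indicator (fun a => f (a - b)) a‖
      ≤ ∑' a, ‖S.indicator (fun a => f (a - b)) a‖ := by
        refine norm_tsum_le_tsum_norm ?_
        simpa only [norm_indicator_eq_indicator_norm] using hshift.indicator S
    _ = ∑' a, S.indicator (fun a => ‖f (a - b)‖) a := by
        simp only [norm_indicator_eq_indicator_norm]
    _ ≤ ∑' a, T.indicator (fun a => ‖f a‖) (a - b) := by
        refine Summable.tsum_le_tsum (fun a => ?_) (hshift.indicator S)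
          ((Equiv.subRight b).summable_iff (f := T.indicator fun a => ‖f a‖) |>.mpr
            (hf.indicator T))
        by_cases ha : a ∈ S
        · simp [ha, hST a ha]
        · simp only [ha, not_false_eq_true, indicator_of_notMem]
          exact indicator_nonneg (fun _ _ => norm_nonneg _) _
    _ = ∑' a, T.indicator (fun a => ‖f a‖) a :=
        (Equiv.subRight b).tsum_eq (T.indicator fun a => ‖f a‖)

theorem tsum_indicator_eq_neg_tsum_indicator_compl [CompleteSpace E] {f : α → E}
    (hf : Summable f) (h0 : ∑' a, f a = 0) (S : Set α) :
    ∑' a, S.indicator f a = -∑' a, Sᶜ.indicator f a := by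
  rw [eq_neg_iff_add_eq_zero, ← (hf.indicator S).tsum_add (hf.indicator Sᶜ)]
  simpa only [indicator_self_add_compl_apply] using h0

end indicator

theorem stmt4_general (N : ℕ) (ψc : (Fin N → ℤ) → ℂ)
    (hdecay : ∀ q : ℕ, ∃ c : ℝ, ∀ m, ‖ψc m‖ ≤ c * (1 + znorm m) ^ (-(q : ℝ)))
    (hvanish : (∑' m, ψc m) = 0)
    (θ : ℕ → (Fin N → ℤ) → ℂ)
    (hθ : ∀ j n, θ j n =
      ((2 * π : ℝ) ^ (-(N : ℝ)) : ℝ) *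
        ∑' m : Fin N → ℤ, if (∑ i, (m i) ^ 2 : ℤ) < (j : ℤ) then ψc (m - n) else 0) :
    ∀ l : ℕ, ∃ C : ℝ, ∀ (j : ℕ) (n : Fin N → ℤ),
      ‖θ j n‖ ≤ C * (1 + |znorm n - Real.sqrt j|) ^ (-(l : ℝ)) := by
  intro l
  obtain ⟨C, hC⟩ := RapidlyDecreasing.exists_tsum_indicator_le hdecay l
  refine ⟨(2 * π) ^ (-(N : ℝ)) * C, fun j n => ?_⟩
  have hnorm := RapidlyDecreasing.summable_norm hdecay
  set S : Set (Fin N → ℤ) := {m | znorm m < √j}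
  set T : Set (Fin N → ℤ) := {k | |znorm n - √j| ≤ znorm k}
  have hT : ∀ m, √j ∈ uIcc (znorm m) (znorm n) → m - n ∈ T := fun m hm =>
    (abs_sub_right_of_mem_uIcc hm).trans <|
      (abs_sub_comm _ _).trans_le (abs_znorm_sub_znorm_le m n)
  have hsum : ‖∑' m, S.indicator (fun m => ψc (m - n)) m‖ ≤
      ∑' k, T.indicator (fun k => ‖ψc k‖) k := by
    rcases le_total √j (znorm n) with hn | hn
    · exact norm_tsum_indicator_comp_sub_le hnorm fun m hm =>
        hT m ⟨inf_le_left.trans hm.le, hn.trans le_sup_right⟩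
    · have hshift : Summable fun m => ψc (m - n) :=
        (Equiv.subRight n).summable_iff (f := ψc) |>.mpr hnorm.of_norm
      have hshift0 : ∑' m, ψc (m - n) = 0 := ((Equiv.subRight n).tsum_eq ψc).trans hvanish
      rw [tsum_indicator_eq_neg_tsum_indicator_compl hshift hshift0, norm_neg]
      exact norm_tsum_indicator_comp_sub_le hnorm fun m hm =>
        hT m ⟨inf_le_right.trans hn, (by simpa [S] using hm : √j ≤ znorm m).trans le_sup_left⟩
  have hθS : θ j n = ((2 * π) ^ (-(N : ℝ)) : ℝ) * ∑' m, S.indicator (fun m => ψc (m - n)) m := by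
    simp only [hθ, S, indicator_apply, mem_ofPred_eq, znorm_lt_sqrt_iff]
  rw [hθS, norm_mul, Complex.norm_real, Real.norm_of_nonneg (by positivity), mul_assoc]
  gcongr
  exact hsum.trans (hC _ (abs_nonneg _))

/-- Let `ψ` have Fourier coefficients `ψ_m` with `|ψ_m| ≤ c_q (1+|m|)^{-q}` for every `q`,
summing to `0` (i.e. `ψ(0)=0`).  With `(θ_j)_n = (2π)^{-N} Σ_{|m|²<j} ψ_{m-n}`, for every
`l` there is `C_l` with `|(θ_j)_n| ≤ C_l (1+||n|-√j|)^{-l}` for all `j ∈ ℕ`, `n ∈ ℤ^N`. -/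
theorem stmt4 (N : ℕ) (hN : 1 ≤ N) (ψc : (Fin N → ℤ) → ℂ)
    (hdecay : ∀ q : ℕ, ∃ c : ℝ, ∀ m, ‖ψc m‖ ≤ c * (1 + znorm m) ^ (-(q : ℝ)))
    (hsum : Summable ψc) (hvanish : (∑' m, ψc m) = 0)
    (θ : ℕ → (Fin N → ℤ) → ℂ)
    (hθ : ∀ j n, θ j n =
      ((2 * π : ℝ) ^ (-(N : ℝ)) : ℝ) *
        ∑' m : Fin N → ℤ, if (∑ i, (m i) ^ 2 : ℤ) < (j : ℤ) then ψc (m - n) else 0) :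
    ∀ l : ℕ, ∃ C : ℝ, ∀ (j : ℕ) (n : Fin N → ℤ),
      ‖θ j n‖ ≤ C * (1 + |znorm n - Real.sqrt j|) ^ (-(l : ℝ)) :=
  stmt4_general N ψc hdecay hvanish θ hθ
end

section
/- If (θ_j)_n satisfies |(θ_j)_n| ≤ C_l (1 + ||n| − √j|)^{−l} for all l (with constants C_l), then Σ_{j=0}^∞ |(θ_j)_n|² ≤ C |n| for all n ∈ ℤ^N with n ≠ 0, with C independent of n. -/
open Real Finset

/-!
Take `l = 2` and `x = |n| ≥ 1`. The elementary inequality `x + |x² - t²| ≤ x (1 + |x - t|)²`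
(from `|x² - t²| = |x - t| |x + t|`) turns the decay hypothesis into
`|θ_j(n)|² ≤ C₂² x² (x + |x² - j|)⁻²`. Reindexing the `j ≤ x²` by `⌊x²⌋₊ - j` and the
`j > x²` by `j - ⌈x²⌉₊`, both injective and at most `|x² - j|`, bounds the sum over `j` by
twice `∑ₘ (x + m)⁻² ≤ 2 / x`; altogether `∑ⱼ |θ_j(n)|² ≤ 4 C₂² x`.
-/

lemma sum_range_inv_add_sq_le {x : ℝ} (hx : 1 ≤ x) (M : ℕ) :
    ∑ m ∈ range M, ((x + m) ^ 2)⁻¹ ≤ 2 / x := by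
  -- `1 / a² ≤ 2 / (a (a + 1)) = 2 (1 / a - 1 / (a + 1))` for `a ≥ 1`, which telescopes.
  have htel : ∀ m : ℕ, ((x + m) ^ 2)⁻¹ ≤ 2 * ((x + m)⁻¹ - (x + (m + 1 : ℕ))⁻¹) := by
    intro m
    have ha : 1 ≤ x + m := by linarith [m.cast_nonneg (α := ℝ)]
    rw [Nat.cast_succ, ← add_assoc, inv_sub_inv (by positivity) (by positivity),
      inv_le_iff_one_le_mul₀ (by positivity)]
    field_simp
    nlinarith
  calc ∑ m ∈ range M, ((x + m) ^ 2)⁻¹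
      ≤ ∑ m ∈ range M, 2 * ((x + m)⁻¹ - (x + (m + 1 : ℕ))⁻¹) := sum_le_sum fun m _ => htel m
    _ = 2 * (x⁻¹ - (x + M)⁻¹) := by
        rw [← mul_sum, sum_range_sub' (fun m : ℕ => (x + m)⁻¹), Nat.cast_zero, add_zero]
    _ ≤ 2 / x := by
        have : 0 ≤ (x + M)⁻¹ := by positivity
        rw [div_eq_mul_inv]
        linarith

lemma sum_inv_add_sq_le {x : ℝ} (hx : 1 ≤ x) (T : Finset ℕ) :
    ∑ m ∈ T, ((x + m) ^ 2)⁻¹ ≤ 2 / x := by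
  obtain ⟨M, hM⟩ : ∃ M, T ⊆ range M := ⟨T.sup id + 1, fun m hm =>
    mem_range.2 (Nat.lt_succ_of_le (le_sup (f := id) hm))⟩
  refine (sum_le_sum_of_subset_of_nonneg hM fun _ _ _ => ?_).trans
    (sum_range_inv_add_sq_le hx M)
  positivity

lemma sum_comp_abs_sub_natCast_le {f : ℝ → ℝ} (hf : AntitoneOn f (Set.Ici 0)) {B : ℝ}
    (hB : ∀ T : Finset ℕ, ∑ m ∈ T, f m ≤ B) (y : ℝ) (s : Finset ℕ) :
    ∑ j ∈ s, f |y - j| ≤ 2 * B := by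
  have reindex : ∀ (t : Finset ℕ) (g : ℕ → ℕ), Set.InjOn g t →
      (∀ j ∈ t, (g j : ℝ) ≤ |y - j|) → ∑ j ∈ t, f |y - j| ≤ B := fun t g hg hle =>
    calc ∑ j ∈ t, f |y - j| ≤ ∑ j ∈ t, f (g j) := sum_le_sum fun j hj =>
          hf (by simp) (by simp) (hle j hj)
      _ = ∑ m ∈ t.image g, f m := (sum_image (f := fun m : ℕ => f m) hg).symm
      _ ≤ B := hB _
  have below : ∑ j ∈ s.filter (fun j : ℕ => (j : ℝ) ≤ y), f |y - j| ≤ B := by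
    refine reindex _ (fun j => ⌊y⌋₊ - j) (fun a ha b hb hab => ?_) fun j hj => ?_
    · rw [mem_coe, mem_filter] at ha hb
      have := Nat.le_floor ha.2
      have := Nat.le_floor hb.2
      simp only at hab
      omega
    · rw [mem_filter] at hj
      have hjy := Nat.le_floor hj.2
      rw [Nat.cast_sub hjy, abs_of_nonneg (by linarith)]
      linarith [Nat.floor_le ((j.cast_nonneg).trans hj.2)]
  have above : ∑ j ∈ s.filter (fun j : ℕ => ¬(j : ℝ) ≤ y), f |y - j| ≤ B := by
    refine reindex _ (fun j => j - ⌈y⌉₊) (fun a ha b hb hab => ?_) fun j hj => ?_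
    · rw [mem_coe, mem_filter, not_le] at ha hb
      have := Nat.ceil_le.2 ha.2.le
      have := Nat.ceil_le.2 hb.2.le
      simp only at hab
      omega
    · rw [mem_filter, not_le] at hj
      rw [Nat.cast_sub (Nat.ceil_le.2 hj.2.le), abs_of_neg (by linarith)]
      linarith [Nat.le_ceil y]
  rw [← sum_filter_add_sum_filter_not s (fun j : ℕ => (j : ℝ) ≤ y)]
  linarith

lemma sum_inv_add_abs_sub_sq_le {x : ℝ} (hx : 1 ≤ x) (y : ℝ) (s : Finset ℕ) :
    ∑ j ∈ s, ((x + |y - j|) ^ 2)⁻¹ ≤ 4 / x := by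
  have hanti : AntitoneOn (fun t : ℝ => ((x + t) ^ 2)⁻¹) (Set.Ici 0) := fun a ha b _ hab => by
    have : (0 : ℝ) ≤ a := ha
    dsimp only
    gcongr
  calc ∑ j ∈ s, ((x + |y - j|) ^ 2)⁻¹ ≤ 2 * (2 / x) :=
        sum_comp_abs_sub_natCast_le hanti (sum_inv_add_sq_le hx) y s
    _ = 4 / x := by ring

lemma add_abs_sq_sub_sq_le {x : ℝ} (hx : 1 ≤ x) (t : ℝ) :
    x + |x ^ 2 - t ^ 2| ≤ x * (1 + |x - t|) ^ 2 := by
  have hsum : |x + t| ≤ 2 * x + |x - t| := by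
    calc |x + t| = |2 * x - (x - t)| := by ring_nf
      _ ≤ |2 * x| + |x - t| := abs_sub _ _
      _ = 2 * x + |x - t| := by rw [abs_of_pos (by linarith)]
  have hd := abs_nonneg (x - t)
  rw [show x ^ 2 - t ^ 2 = (x - t) * (x + t) by ring, abs_mul]
  nlinarith [mul_le_mul_of_nonneg_left hsum hd, mul_nonneg (sub_nonneg.2 hx) (sq_nonneg |x - t|)]

lemma inv_one_add_abs_sub_pow_four_le {x : ℝ} (hx : 1 ≤ x) (t : ℝ) :
    ((1 + |x - t|) ^ 4)⁻¹ ≤ x ^ 2 * ((x + |x ^ 2 - t ^ 2|) ^ 2)⁻¹ := by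
  have h := pow_le_pow_left₀ (by positivity) (add_abs_sq_sub_sq_le hx t) 2
  rw [← div_eq_mul_inv, le_div_iff₀ (by positivity), inv_mul_le_iff₀ (by positivity)]
  linarith

lemma one_le_znorm {N : ℕ} {n : Fin N → ℤ} (hn : n ≠ 0) : 1 ≤ znorm n := by
  obtain ⟨i, hi⟩ := Function.ne_iff.1 hn
  have hi1 : (1 : ℝ) ≤ (n i : ℝ) ^ 2 := by
    rw [← sq_abs, one_le_sq_iff₀ (abs_nonneg _)]
    exact_mod_cast Int.one_le_abs hi
  exact one_le_sqrt.2 (hi1.trans (single_le_sum (f := fun k => (n k : ℝ) ^ 2)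
    (fun _ _ => sq_nonneg _) (mem_univ i)))

theorem stmt7_general (N : ℕ) (θ : ℕ → (Fin N → ℤ) → ℂ)
    (hdecay : ∀ l : ℕ, ∃ Cl : ℝ, ∀ (j : ℕ) (n : Fin N → ℤ),
      ‖θ j n‖ ≤ Cl * (1 + |znorm n - Real.sqrt j|) ^ (-(l : ℝ))) :
    ∃ C : ℝ, ∀ n : Fin N → ℤ, n ≠ 0 → ∀ s : Finset ℕ,
      ∑ j ∈ s, ‖θ j n‖ ^ 2 ≤ C * znorm n := by
  obtain ⟨C₂, hC₂⟩ := hdecay 2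
  refine ⟨4 * C₂ ^ 2, fun n hn s => ?_⟩
  set x := znorm n
  have hx : 1 ≤ x := one_le_znorm hn
  have hterm : ∀ j ∈ s, ‖θ j n‖ ^ 2 ≤ C₂ ^ 2 * x ^ 2 * ((x + |x ^ 2 - j|) ^ 2)⁻¹ := by
    intro j _
    have hθ := hC₂ j n
    rw [Real.rpow_neg (by positivity), Real.rpow_natCast] at hθ
    calc ‖θ j n‖ ^ 2 ≤ (C₂ * ((1 + |x - √j|) ^ 2)⁻¹) ^ 2 := pow_le_pow_left₀ (norm_nonneg _) hθ 2
      _ = C₂ ^ 2 * ((1 + |x - √j|) ^ 4)⁻¹ := by rw [mul_pow, inv_pow, ← pow_mul]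
      _ ≤ C₂ ^ 2 * (x ^ 2 * ((x + |x ^ 2 - j|) ^ 2)⁻¹) := by
          gcongr
          simpa using inv_one_add_abs_sub_pow_four_le hx √j
      _ = _ := by ring
  calc ∑ j ∈ s, ‖θ j n‖ ^ 2 ≤ C₂ ^ 2 * x ^ 2 * ∑ j ∈ s, ((x + |x ^ 2 - j|) ^ 2)⁻¹ := by
        rw [mul_sum]
        exact sum_le_sum hterm
    _ ≤ C₂ ^ 2 * x ^ 2 * (4 / x) := by
        gcongr
        exact sum_inv_add_abs_sub_sq_le hx _ s
    _ = 4 * C₂ ^ 2 * x := by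
        field_simp

/-- If `|(θ_j)_n| ≤ C_l (1+||n|-√j|)^{-l}` for all `l`, then
`Σ_{j=0}^∞ |(θ_j)_n|² ≤ C|n|` for all `n ≠ 0`, with `C` independent of `n`
(stated via all finite partial sums). -/
theorem stmt7 (N : ℕ) (hN : 1 ≤ N) (θ : ℕ → (Fin N → ℤ) → ℂ)
    (hdecay : ∀ l : ℕ, ∃ Cl : ℝ, ∀ (j : ℕ) (n : Fin N → ℤ),
      ‖θ j n‖ ≤ Cl * (1 + |znorm n - Real.sqrt j|) ^ (-(l : ℝ))) :
    ∃ C : ℝ, ∀ n : Fin N → ℤ, n ≠ 0 → ∀ s : Finset ℕ,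
      ∑ j ∈ s, ‖θ j n‖ ^ 2 ≤ C * znorm n :=
  stmt7_general N θ hdecay
end

section
/- Assuming Carleson's theorem (a.e. convergence of one-dimensional Fourier series of L²(𝕋) functions) and the square-function bound of the previous statement, the square partial sums M_k f(x₁,x₂) = Σ_{|n₁|≤k} Σ_{|n₂|≤k} f_{n₁,n₂} e^{i(n₁x₁+n₂x₂)} of any f ∈ L²(𝕋²) converge for almost every (x₁,x₂) ∈ 𝕋². -/
/-!
Split the square `[-k, k]²` of frequencies into the parts `|n₂| ≤ |n₁|` and `|n₁| < |n₂|`.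
On the first part the square partial sum is the symmetric partial sum, in `x₁`, of the
one-variable series with coefficients `A n₁ x₂ = Σ_{|n₂| ≤ |n₁|} c (n₁, n₂) e^{i n₂ x₂}`.
By Parseval `Σ_{n₁} ∫ |A n₁|² ≤ 2π Σ ‖c‖² < ∞`, so `n₁ ↦ A n₁ x₂` is square summable for
a.e. `x₂`, and Carleson's theorem gives convergence for a.e. `x₁`; Fubini turns this into
a.e. convergence on the square. The second part is the same with the variables exchanged.
-/

open Real MeasureTheory Finset Filter
open Complex (I)
open ComplexConjugate

noncomputable def trigSum (s : Finset ℤ) (c : ℤ → ℂ) (x : ℝ) : ℂ :=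
  ∑ n ∈ s, c n * Complex.exp (I * (n : ℝ) * x)

theorem continuous_trigSum (s : Finset ℤ) (c : ℤ → ℂ) : Continuous (trigSum s c) := by
  unfold trigSum; fun_prop

theorem setIntegral_exp_int_mul_I (j : ℤ) :
    ∫ x in Set.Ioc (-π) π, Complex.exp (I * (j : ℝ) * x) = if j = 0 then 2 * π else 0 := by
  rw [← intervalIntegral.integral_of_le (by linarith [pi_pos])]
  split_ifs with hj
  · simp [hj]; ring
  have hc : I * (j : ℝ) ≠ 0 := by simp [hj]
  have hper : Complex.exp (I * (j : ℝ) * π) = Complex.exp (I * (j : ℝ) * ↑(-π)) :=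
    Complex.exp_eq_exp_iff_exists_int.mpr ⟨j, by push_cast; ring⟩
  rw [integral_exp_mul_complex hc, hper, sub_self, zero_div, Complex.ofReal_zero]

theorem setIntegral_norm_trigSum_sq (s : Finset ℤ) (c : ℤ → ℂ) :
    ∫ x in Set.Ioc (-π) π, ‖trigSum s c x‖ ^ 2 = 2 * π * ∑ n ∈ s, ‖c n‖ ^ 2 := by
  have expand : ∀ x : ℝ, ((‖trigSum s c x‖ ^ 2 : ℝ) : ℂ) =
      ∑ m ∈ s, ∑ n ∈ s, conj (c m) * c n * Complex.exp (I * ((n - m : ℤ) : ℝ) * x) := by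
    intro x
    rw [Complex.ofReal_pow, ← Complex.conj_mul', trigSum, map_sum, sum_mul_sum]
    refine sum_congr rfl fun m _ => sum_congr rfl fun n _ => ?_
    rw [map_mul, ← Complex.exp_conj, mul_mul_mul_comm, ← Complex.exp_add]
    congr 2
    simp only [map_mul, Complex.conj_I, Complex.conj_ofReal]
    push_cast
    ring
  have hint (j : ℤ) :
      IntegrableOn (fun x : ℝ => Complex.exp (I * (j : ℝ) * x)) (Set.Ioc (-π) π) :=
    (by fun_prop : Continuous _).integrableOn_Ioc
  apply Complex.ofReal_injective
  rw [← integral_complex_ofReal]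
  simp_rw [expand]
  rw [integral_finsetSum _ fun m _ => integrable_finsetSum _ fun n _ => (hint _).const_mul _]
  simp_rw [integral_finsetSum _ fun n _ => (hint _).const_mul _, integral_const_mul,
    setIntegral_exp_int_mul_I, sub_eq_zero]
  simp only [apply_ite (fun r : ℝ => (r : ℂ)), Complex.ofReal_zero, mul_ite, mul_zero,
    sum_ite_eq', Complex.conj_mul', mul_sum]
  push_cast
  exact sum_congr rfl fun n hn => by rw [if_pos hn]; ring

theorem ae_summable_of_summable_integral {ι α : Type*} [Countable ι] [MeasurableSpace α]
    {μ : Measure α} {f : ι → α → ℝ} (hf_nonneg : ∀ i x, 0 ≤ f i x)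
    (hf_int : ∀ i, Integrable (f i) μ) (hf_sum : Summable fun i => ∫ x, f i x ∂μ) :
    ∀ᵐ x ∂μ, Summable fun i => f i x := by
  have hmeas (i : ι) : AEMeasurable (fun x => ENNReal.ofReal (f i x)) μ :=
    (hf_int i).aemeasurable.ennreal_ofReal
  have hfin : ∫⁻ x, ∑' i, ENNReal.ofReal (f i x) ∂μ ≠ ⊤ := by
    rw [lintegral_tsum hmeas]
    simp_rw [← ofReal_integral_eq_lintegral_ofReal (hf_int _) (ae_of_all _ (hf_nonneg _)),
      ← ENNReal.ofReal_tsum_of_nonneg (fun i => integral_nonneg (hf_nonneg i)) hf_sum]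
    exact ENNReal.ofReal_ne_top
  filter_upwards [ae_lt_top' (AEMeasurable.tsum hmeas) hfin] with x hx
  simpa [ENNReal.toReal_ofReal (hf_nonneg _ x)] using ENNReal.summable_toReal hx.ne

theorem ae_summable_sq_norm_trigSum {d : ℤ × ℤ → ℂ} (hd : Summable fun p => ‖d p‖ ^ 2)
    (t : ℤ → Finset ℤ) :
    ∀ᵐ y ∂(volume.restrict (Set.Ioc (-π) π)),
      Summable fun n => ‖trigSum (t n) (fun m => d (n, m)) y‖ ^ 2 := by
  refine ae_summable_of_summable_integral (fun _ _ => sq_nonneg _)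
    (fun n => ((continuous_trigSum _ _).norm.pow 2).integrableOn_Ioc) ?_
  simp_rw [setIntegral_norm_trigSum_sq]
  refine (hd.prod.mul_left (2 * π)).of_nonneg_of_le
    (fun n => by positivity) fun n => mul_le_mul_of_nonneg_left ?_ (by positivity)
  exact (hd.prod_factor n).sum_le_tsum _ fun _ _ => sq_nonneg _

def CarlesonConvergence : Prop :=
  ∀ c : ℤ → ℂ, (Summable fun n => ‖c n‖ ^ 2) →
    ∀ᵐ x ∂(volume.restrict (Set.Ioc (-π) π)),
      ∃ L : ℂ, Tendsto (fun k : ℕ => trigSum (Icc (-(k : ℤ)) k) c x) atTop (nhds L)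

theorem CarlesonConvergence.ae_exists_tendsto_nested_trigSum (hC : CarlesonConvergence)
    {d : ℤ × ℤ → ℂ} (hd : Summable fun p => ‖d p‖ ^ 2) (t : ℤ → Finset ℤ) :
    ∀ᵐ z ∂((volume.restrict (Set.Ioc (-π) π)).prod (volume.restrict (Set.Ioc (-π) π))),
      ∃ L : ℂ, Tendsto (fun k : ℕ =>
        trigSum (Icc (-(k : ℤ)) k) (fun n => trigSum (t n) (fun m => d (n, m)) z.2) z.1)
        atTop (nhds L) := by
  have hmeas : MeasurableSet {z : ℝ × ℝ | ∃ L : ℂ, Tendsto (fun k : ℕ =>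
      trigSum (Icc (-(k : ℤ)) k) (fun n => trigSum (t n) (fun m => d (n, m)) z.2) z.1)
        atTop (nhds L)} :=
    measurableSet_exists_tendsto fun k => Continuous.measurable (by unfold trigSum; fun_prop)
  rw [Measure.ae_prod_iff_ae_ae hmeas, Measure.ae_ae_comm hmeas]
  filter_upwards [ae_summable_sq_norm_trigSum hd t] with y hy using hC _ hy

theorem sum_Icc_sum_Icc_eq_sum_abs_le_add_sum_abs_lt {M : Type*} [AddCommMonoid M] (k : ℤ)
    (G : ℤ → ℤ → M) :
    ∑ n₁ ∈ Icc (-k) k, ∑ n₂ ∈ Icc (-k) k, G n₁ n₂ =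
      ∑ n₁ ∈ Icc (-k) k, ∑ n₂ ∈ Icc (-|n₁|) |n₁|, G n₁ n₂ +
        ∑ n₂ ∈ Icc (-k) k, ∑ n₁ ∈ Ioo (-|n₂|) |n₂|, G n₁ n₂ := by
  rw [← sum_product', ← sum_filter_add_sum_filter_not _ fun p => |p.2| ≤ |p.1|,
    sum_finset_product _ _ _ ?_, sum_finset_product_right _ _ _ ?_]
  all_goals
    intro p
    simp only [mem_filter, mem_product, mem_Icc, mem_Ioo]
    constructor <;> intro h <;> cases abs_cases p.1 <;> cases abs_cases p.2 <;> omega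

/-- Assuming Carleson's theorem (a.e. convergence of the Fourier series of any `L²(𝕋)`
function, stated in terms of square-summable coefficients), the square partial sums
`M_k f(x₁,x₂) = Σ_{|n₁|≤k} Σ_{|n₂|≤k} f_{n₁,n₂} e^{i(n₁x₁+n₂x₂)}` of any `f ∈ L²(𝕋²)`
converge for almost every `(x₁,x₂) ∈ 𝕋²`. -/
theorem stmt12
    (carleson : ∀ c : ℤ → ℂ, (Summable fun n => ‖c n‖ ^ 2) →
      ∀ᵐ x : ℝ ∂(volume.restrict (Set.Ioc (-π) π)),
        ∃ L : ℂ, Tendsto (fun k : ℕ =>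
          ∑ n ∈ Finset.Icc (-(k : ℤ)) (k : ℤ), c n * Complex.exp (Complex.I * (n : ℝ) * x))
          atTop (nhds L))
    (c : ℤ × ℤ → ℂ) (hc : Summable fun p => ‖c p‖ ^ 2) :
    ∀ᵐ x : ℝ × ℝ ∂((volume.restrict (Set.Ioc (-π) π)).prod
        (volume.restrict (Set.Ioc (-π) π))),
      ∃ L : ℂ, Tendsto (fun k : ℕ =>
        ∑ n₁ ∈ Finset.Icc (-(k : ℤ)) (k : ℤ), ∑ n₂ ∈ Finset.Icc (-(k : ℤ)) (k : ℤ),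
          c (n₁, n₂) * Complex.exp (Complex.I * ((n₁ : ℝ) * x.1 + (n₂ : ℝ) * x.2)))
        atTop (nhds L) := by
  have hC : CarlesonConvergence := carleson
  have hc_swap : Summable fun p => ‖(c ∘ Prod.swap) p‖ ^ 2 :=
    hc.comp_injective Prod.swap_injective
  filter_upwards [hC.ae_exists_tendsto_nested_trigSum hc fun n => Icc (-|n|) |n|,
    Measure.measurePreserving_swap.quasiMeasurePreserving.ae
      (hC.ae_exists_tendsto_nested_trigSum hc_swap fun n => Ioo (-|n|) |n|)]
    with x ⟨L₁, h₁⟩ ⟨L₂, h₂⟩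
  refine ⟨L₁ + L₂, (h₁.add h₂).congr fun k => ?_⟩
  rw [sum_Icc_sum_Icc_eq_sum_abs_le_add_sum_abs_lt]
  simp only [trigSum, sum_mul, Function.comp_apply, Prod.swap_prod_mk, Prod.fst_swap,
    Prod.snd_swap]
  congr 1 <;> refine sum_congr rfl fun _ _ => sum_congr rfl fun _ _ => ?_ <;>
    rw [mul_assoc, ← Complex.exp_add] <;> ring_nf
end
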